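/- arXiv:1209.4053 — 5 statements merged into one kernel-verified Lean document; each statement's English description precedes it below -/
import Mathlib

section
/- For every number of spheres n ≥ 2 and dimension d ≥ 2, the maximal radius function G has only finitely many local maximal values: the set {G(x*) : x* is a local maximum of G with G(x*) > 0} is finite, of cardinality at most 2^{N(n,d)} where N(n,d) = n(n−1)/2 + 2nd. In particular, there are only finitely many radii at which jammed configurations of n spheres in [0,1]^d can occur. -/
/-!
Every function of the family `F` is convex with an explicit subgradient (`x_{ik}` and `1 - x_{ik}`
are affine, `|x_i - x_j| / 2` is a norm composed with a linear map). At a local maximum `y` of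
`G = min F`, the origin is a convex combination of the subgradients of the functions active at
`y`, i.e. attaining the minimum there. If `x` is a second local maximum with the same active set,
the subgradient inequalities at `y` evaluated at `x` give `⟪∂f(y), x - y⟫ ≤ G x - G y` for every
active `f`, and the vanishing convex combination yields `G y ≤ G x`; by symmetry `G x = G y`. Hence
a local maximal value is determined by a subset of `F`, so there are at most `2 ^ |F|` of them.
-/

open scoped BigOperators

/-- Euclidean distance between the `i`-th and `j`-th blocks of a configuration
`x ∈ ℝ^{dn}` of `n` points in `ℝ^d`. -/
noncomputable def pairDist (n d : ℕ) (x : EuclideanSpace ℝ (Fin n × Fin d))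
    (i j : Fin n) : ℝ :=
  Real.sqrt (∑ k : Fin d, (x (i, k) - x (j, k)) ^ 2)

/-- Index set for the family `F`: pairs `i < j` (functions `φ_{ij}`), together with
two copies of `Fin n × Fin d` (functions `ψ_{ik}` and `ψ^{ik}`). -/
def Idx (n d : ℕ) : Type :=
  {p : Fin n × Fin n // p.1 < p.2} ⊕ ((Fin n × Fin d) ⊕ (Fin n × Fin d))

/-- The family `F` of functions: `φ_{ij}(x) = |x_i - x_j|/2`, `ψ_{ik}(x) = x_{ik}`,
`ψ^{ik}(x) = 1 - x_{ik}`. -/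
noncomputable def famF (n d : ℕ) : Idx n d → EuclideanSpace ℝ (Fin n × Fin d) → ℝ
  | Sum.inl p => fun x => pairDist n d x p.1.1 p.1.2 / 2
  | Sum.inr (Sum.inl q) => fun x => x q
  | Sum.inr (Sum.inr q) => fun x => 1 - x q

/-- The maximal radius function `G(x) = min_{f ∈ F} f(x)`. -/
noncomputable def maxRad (n d : ℕ) (x : EuclideanSpace ℝ (Fin n × Fin d)) : ℝ :=
  ⨅ l : Idx n d, famF n d l x

/-- `x` is an `r`-admissible configuration: pairwise distances at least `2r` and all
coordinates in `[r, 1-r]`. `M_n^d(r)` is the set of `r`-admissible configurations. -/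
def Admissible (n d : ℕ) (r : ℝ) (x : EuclideanSpace ℝ (Fin n × Fin d)) : Prop :=
  (∀ i j : Fin n, i ≠ j → 2 * r ≤ pairDist n d x i j) ∧
  ∀ q : Fin n × Fin d, r ≤ x q ∧ x q ≤ 1 - r

open scoped RealInnerProductSpace Topology
open Filter

section MinOfConvex

variable {E ι : Type*} [NormedAddCommGroup E] [InnerProductSpace ℝ E]

lemma norm_add_inner_smul_sub_le (u v : E) : ‖u‖ + ⟪‖u‖⁻¹ • u, v - u⟫ ≤ ‖v‖ := by
  rcases eq_or_ne u 0 with rfl | hu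
  · simp
  have hcs := real_inner_le_norm u v
  rw [real_inner_smul_left, inner_sub_right, real_inner_self_eq_norm_sq]
  field_simp
  nlinarith

def activeSet (f : ι → E → ℝ) (x : E) : Set ι :=
  {l | f l x = ⨅ l, f l x}

lemma exists_forall_inner_pos_of_zero_notMem_convexHull [CompleteSpace E] {T : Set E}
    (hT : T.Finite) (h0 : (0 : E) ∉ convexHull ℝ T) : ∃ w : E, ∀ v ∈ T, 0 < ⟪v, w⟫ := by
  obtain ⟨φ, c, hφ0, hφT⟩ := geometric_hahn_banach_point_closed
    (convex_convexHull ℝ T) (hT.isClosed_convexHull ℝ) h0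
  refine ⟨(InnerProductSpace.toDual ℝ E).symm φ, fun v hv => ?_⟩
  rw [real_inner_comm, InnerProductSpace.toDual_symm_apply]
  have := hφT v (subset_convexHull ℝ T hv)
  rw [map_zero] at hφ0
  linarith

variable [Finite ι] [Nonempty ι] {f : ι → E → ℝ} {g : ι → E → E}

/-- If not, some direction `w` increases every active function to first order, while the
inactive ones stay above the minimum by continuity, so the minimum increases along `w`. -/
theorem zero_mem_convexHull_of_isLocalMax_iInf [CompleteSpace E] (hf : ∀ l, Continuous (f l))
    (hg : ∀ l x z, f l x + ⟪g l x, z - x⟫ ≤ f l z) {x : E}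
    (hx : IsLocalMax (fun x => ⨅ l, f l x) x) :
    (0 : E) ∈ convexHull ℝ ((g · x) '' activeSet f x) := by
  by_contra h0
  obtain ⟨w, hw⟩ := exists_forall_inner_pos_of_zero_notMem_convexHull
    ((Set.toFinite _).image _) h0
  set r := ⨅ l, f l x
  have hpath : Tendsto (fun t : ℝ => x + t • w) (𝓝[>] 0) (𝓝 x) :=
    tendsto_nhdsWithin_of_tendsto_nhds <|
      (by fun_prop : Continuous fun t : ℝ => x + t • w).tendsto' 0 x (by simp)
  have hincrease : ∀ᶠ t in 𝓝[>] (0 : ℝ), ∀ l, r < f l (x + t • w) := by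
    refine eventually_all.2 fun l => ?_
    by_cases hl : l ∈ activeSet f x
    · filter_upwards [eventually_mem_nhdsWithin] with t (ht : 0 < t)
      have := hg l x (x + t • w)
      rw [add_sub_cancel_left, real_inner_smul_right, hl] at this
      nlinarith [hw _ ⟨l, hl, rfl⟩]
    · exact ((hf l).tendsto x |>.comp hpath).eventually <| eventually_gt_nhds <|
        (ciInf_le (Set.finite_range _).bddBelow l).lt_of_ne (Ne.symm hl)
  obtain ⟨t, hle, hlt⟩ := ((hpath.eventually hx).and hincrease).exists
  obtain ⟨l, hl⟩ := exists_eq_ciInf_of_finite (f := fun l => f l (x + t • w))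
  exact (hlt l).not_ge (hl.trans_le hle)

theorem iInf_le_iInf_of_activeSet_subset [CompleteSpace E] (hf : ∀ l, Continuous (f l))
    (hg : ∀ l x z, f l x + ⟪g l x, z - x⟫ ≤ f l z) {x y : E}
    (hy : IsLocalMax (fun x => ⨅ l, f l x) y) (hxy : activeSet f y ⊆ activeSet f x) :
    ⨅ l, f l y ≤ ⨅ l, f l x := by
  set δ := (⨅ l, f l x) - ⨅ l, f l y
  have hhalf : (g · y) '' activeSet f y ⊆ {v | ⟪v, x - y⟫ ≤ δ} := by
    rintro _ ⟨l, hl, rfl⟩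
    have := hg l y x
    rw [hl, hxy hl] at this
    exact le_sub_iff_add_le'.2 this
  have hconvex : Convex ℝ {v : E | ⟪v, x - y⟫ ≤ δ} :=
    convex_halfSpace_le ⟨fun _ _ => inner_add_left _ _ _, fun _ _ => real_inner_smul_left _ _ _⟩ δ
  have := convexHull_min hhalf hconvex (zero_mem_convexHull_of_isLocalMax_iInf hf hg hy)
  simpa [δ] using this

def localMaxValues (G : E → ℝ) : Set ℝ :=
  {r | ∃ x, IsLocalMax G x ∧ G x = r}

/-- A local maximal value is determined by the active set of any point attaining it. -/
theorem localMaxValues_iInf_finite_and_ncard_le [CompleteSpace E] (hf : ∀ l, Continuous (f l))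
    (hg : ∀ l x z, f l x + ⟪g l x, z - x⟫ ≤ f l z) :
    (localMaxValues fun x => ⨅ l, f l x).Finite ∧
      (localMaxValues fun x => ⨅ l, f l x).ncard ≤ 2 ^ Nat.card ι := by
  choose! point hmax hval using fun r (hr : r ∈ localMaxValues fun x => ⨅ l, f l x) => hr
  have hinj : Set.InjOn (fun r => activeSet f (point r)) (localMaxValues fun x => ⨅ l, f l x) := by
    intro r hr s hs hrs
    rw [← hval r hr, ← hval s hs]
    exact le_antisymm (iInf_le_iInf_of_activeSet_subset hf hg (hmax r hr) hrs.le)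
      (iInf_le_iInf_of_activeSet_subset hf hg (hmax s hs) hrs.ge)
  have := Fintype.ofFinite ι
  refine ⟨Set.Finite.of_injOn (Set.mapsTo_univ _ _) hinj Set.finite_univ, ?_⟩
  calc _ ≤ (Set.univ : Set (Set ι)).ncard := Set.ncard_le_ncard_of_injOn _ (fun _ _ => trivial) hinj
    _ = 2 ^ Nat.card ι := by
      rw [Set.ncard_univ, Nat.card_eq_fintype_card, Fintype.card_set, Nat.card_eq_fintype_card]

end MinOfConvex

instance (n d : ℕ) : Finite (Idx n d) :=
  inferInstanceAs (Finite (_ ⊕ _))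

lemma natCard_idx (n d : ℕ) : Nat.card (Idx n d) = n * (n - 1) / 2 + 2 * n * d := by
  rw [show Nat.card (Idx n d) = Nat.card (_ ⊕ _ ⊕ _) from rfl, Nat.card_sum, Nat.card_sum,
    Nat.card_eq_fintype_card, Fintype.card_subtype, Fintype.card_product_filter_lt]
  simp only [Nat.card_eq_fintype_card, Fintype.card_prod, Fintype.card_fin, Nat.choose_two_right]
  ring

lemma nonempty_idx_of_maxRad_pos {n d : ℕ} {x : EuclideanSpace ℝ (Fin n × Fin d)}
    (hx : 0 < maxRad n d x) : Nonempty (Idx n d) := by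
  by_contra h
  rw [not_nonempty_iff] at h
  simp [maxRad, Real.iInf_of_isEmpty] at hx

def blockDiff {n : ℕ} (d : ℕ) (i j : Fin n) :
    EuclideanSpace ℝ (Fin n × Fin d) →ₗ[ℝ] EuclideanSpace ℝ (Fin d) where
  toFun x := WithLp.toLp 2 fun k => x (i, k) - x (j, k)
  map_add' x y := by ext k; simp only [PiLp.add_apply]; ring
  map_smul' c x := by ext k; simp [mul_sub]

lemma pairDist_eq_norm_blockDiff (n d : ℕ) (x : EuclideanSpace ℝ (Fin n × Fin d)) (i j : Fin n) :
    pairDist n d x i j = ‖blockDiff d i j x‖ := by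
  simp [pairDist, EuclideanSpace.norm_eq, blockDiff]

/-- At a collision `x_i = x_j` the junk value `‖0‖⁻¹ = 0` yields `0`, which is a subgradient of
the norm at `0`. -/
noncomputable def famFSubgrad (n d : ℕ) (x : EuclideanSpace ℝ (Fin n × Fin d)) :
    Idx n d → EuclideanSpace ℝ (Fin n × Fin d)
  | Sum.inl p =>
      (2 : ℝ)⁻¹ • LinearMap.adjoint (blockDiff d p.1.1 p.1.2)
        (‖blockDiff d p.1.1 p.1.2 x‖⁻¹ • blockDiff d p.1.1 p.1.2 x)
  | Sum.inr (Sum.inl q) => EuclideanSpace.single q 1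
  | Sum.inr (Sum.inr q) => -EuclideanSpace.single q 1

lemma famF_add_inner_famFSubgrad_le (n d : ℕ) (l : Idx n d)
    (x z : EuclideanSpace ℝ (Fin n × Fin d)) :
    famF n d l x + ⟪famFSubgrad n d x l, z - x⟫ ≤ famF n d l z := by
  rcases l with ⟨⟨i, j⟩, -⟩ | q | q
  · have := norm_add_inner_smul_sub_le (blockDiff d i j x) (blockDiff d i j z)
    simp only [famF, famFSubgrad, pairDist_eq_norm_blockDiff, real_inner_smul_left,
      LinearMap.adjoint_inner_left, map_sub] at this ⊢
    linarith
  · simp [famF, famFSubgrad, EuclideanSpace.inner_single_left]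
  · simp [famF, famFSubgrad, EuclideanSpace.inner_single_left]

lemma continuous_famF (n d : ℕ) (l : Idx n d) : Continuous (famF n d l) := by
  rcases l with ⟨⟨i, j⟩, -⟩ | q | q
  · simp only [famF, pairDist_eq_norm_blockDiff]
    exact ((blockDiff d i j).continuous_of_finiteDimensional.norm).div_const 2
  · exact PiLp.continuous_apply 2 _ q
  · exact continuous_const.sub (PiLp.continuous_apply 2 _ q)

theorem finitely_many_jamming_radii_general (n d : ℕ) :
    {r : ℝ | 0 < r ∧ ∃ x : EuclideanSpace ℝ (Fin n × Fin d),
        IsLocalMax (maxRad n d) x ∧ maxRad n d x = r}.Finite ∧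
    {r : ℝ | 0 < r ∧ ∃ x : EuclideanSpace ℝ (Fin n × Fin d),
        IsLocalMax (maxRad n d) x ∧ maxRad n d x = r}.ncard
      ≤ 2 ^ (n * (n - 1) / 2 + 2 * n * d) := by
  set R := {r : ℝ | 0 < r ∧ ∃ x : EuclideanSpace ℝ (Fin n × Fin d),
    IsLocalMax (maxRad n d) x ∧ maxRad n d x = r}
  have hsub : R ⊆ localMaxValues (maxRad n d) := fun _ hr => hr.2
  obtain hempty | ⟨_, hpos, x, -, rfl⟩ := R.eq_empty_or_nonempty
  · simp [hempty]
  have := nonempty_idx_of_maxRad_pos hpos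
  obtain ⟨hfin, hcard⟩ := localMaxValues_iInf_finite_and_ncard_le
    (continuous_famF n d) (famF_add_inner_famFSubgrad_le n d)
  rw [natCard_idx] at hcard
  exact ⟨hfin.subset hsub, (Set.ncard_le_ncard hsub hfin).trans hcard⟩

/-- For every `n ≥ 2` and `d ≥ 2`, the maximal radius function `G` has only finitely
many positive local maximal values, at most `2 ^ (n(n-1)/2 + 2nd)` many. -/
theorem finitely_many_jamming_radii (n d : ℕ) (hn : 2 ≤ n) (hd : 2 ≤ d) :
    {r : ℝ | 0 < r ∧ ∃ x : EuclideanSpace ℝ (Fin n × Fin d),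
        IsLocalMax (maxRad n d) x ∧ maxRad n d x = r}.Finite ∧
    {r : ℝ | 0 < r ∧ ∃ x : EuclideanSpace ℝ (Fin n × Fin d),
        IsLocalMax (maxRad n d) x ∧ maxRad n d x = r}.ncard
      ≤ 2 ^ (n * (n - 1) / 2 + 2 * n * d) :=
  finitely_many_jamming_radii_general n d
end

section
/- Let f_1,…,f_N : ℝ^m → ℝ be continuous functions each differentiable at a point x, let G(y) = min_{1 ≤ l ≤ N} f_l(y), and let L(x) = {l : f_l(x) = G(x)} be the active index set. Then for every direction v ∈ ℝ^m, the function t ↦ G(x + t v) has a one-sided (right) derivative at t = 0 equal to min_{l ∈ L(x)} ⟨∇f_l(x), v⟩. -/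
open scoped RealInnerProductSpace

/-!
By continuity, near `t = 0` only the active functions can realize the minimum. All active
functions share the value `G(x)` at `t = 0`, so there the difference quotient of the minimum is
the minimum of their difference quotients, which converge to the directional derivatives.
-/

open Filter Set Topology

theorem Filter.Tendsto.ciInf_nhds_apply {ι X L : Type*} [Finite ι] [Nonempty ι]
    [ConditionallyCompleteLattice L] [TopologicalSpace L] [ContinuousInf L]
    {g : ι → X → L} {c : ι → L} {l : Filter X} (hg : ∀ i, Tendsto (g i) l (𝓝 (c i))) :
    Tendsto (fun y ↦ ⨅ i, g i y) l (𝓝 (⨅ i, c i)) := by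
  have := Fintype.ofFinite ι
  simpa only [Finset.inf'_univ_eq_ciInf] using
    Tendsto.finset_inf'_nhds_apply Finset.univ_nonempty fun i _ ↦ hg i

theorem eventually_iInf_eq_iInf_minimizers {ι X L : Type*} [Finite ι] [Nonempty ι]
    [ConditionallyCompleteLinearOrder L] [TopologicalSpace L] [OrderClosedTopology L]
    {g : ι → X → L} {c : ι → L} {l : Filter X} (hg : ∀ i, Tendsto (g i) l (𝓝 (c i))) :
    ∀ᶠ y in l, ⨅ i, g i y = ⨅ i : {i // c i = ⨅ j, c j}, g i y := by
  obtain ⟨i₀, hi₀⟩ := exists_eq_ciInf_of_finite (f := c)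
  have hbeaten : ∀ i, ∀ᶠ y in l, ∃ j : {i // c i = ⨅ j, c j}, g j y ≤ g i y := by
    intro i
    by_cases hi : c i = ⨅ j, c j
    · exact .of_forall fun y ↦ ⟨⟨i, hi⟩, le_rfl⟩
    · have hlt : c i₀ < c i := hi₀ ▸ (ciInf_le (Finite.bddBelow_range c) i).lt_of_ne' hi
      exact ((hg i₀).eventually_lt (hg i) hlt).mono fun y hy ↦ ⟨⟨i₀, hi₀⟩, hy.le⟩
  have : Nonempty {i // c i = ⨅ j, c j} := ⟨⟨i₀, hi₀⟩⟩
  filter_upwards [eventually_all.2 hbeaten] with y hy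
  exact le_antisymm
    (ciInf_mono_of_forall_exists (Finite.bddBelow_range _) fun j ↦ ⟨j, le_rfl⟩)
    (ciInf_mono_of_forall_exists (Finite.bddBelow_range _) hy)

theorem hasDerivWithinAt_iInf_Ioi {ι : Type*} [Finite ι] {g : ι → ℝ → ℝ} {d : ι → ℝ} {a : ℝ}
    (hg : ∀ i, HasDerivWithinAt (g i) (d i) (Ioi a) a) :
    HasDerivWithinAt (fun t ↦ ⨅ i, g i t) (⨅ i : {i // g i a = ⨅ j, g j a}, d i) (Ioi a) a := by
  rcases isEmpty_or_nonempty ι with _ | _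
  · -- both infima are the junk value `0` of `⨅` over an empty type
    simpa using hasDerivWithinAt_const a (Ioi a) (0 : ℝ)
  obtain ⟨i₀, hi₀⟩ := exists_eq_ciInf_of_finite (f := fun i ↦ g i a)
  have : Nonempty {i // g i a = ⨅ j, g j a} := ⟨⟨i₀, hi₀⟩⟩
  have hmin := eventually_iInf_eq_iInf_minimizers fun i ↦ (hg i).continuousWithinAt.tendsto
  have hslope := Tendsto.ciInf_nhds_apply
    (g := fun (i : {i // g i a = ⨅ j, g j a}) ↦ slope (g i) a) fun i ↦
      (hasDerivWithinAt_iff_tendsto_slope' self_notMem_Ioi).1 (hg i)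
  refine (hasDerivWithinAt_iff_tendsto_slope' self_notMem_Ioi).2 (hslope.congr' ?_)
  filter_upwards [hmin, self_mem_nhdsWithin] with t hmin_t (hta : a < t)
  have hmono : Monotone fun y ↦ (y - ⨅ j, g j a) / (t - a) := fun _ _ h ↦
    div_le_div_of_nonneg_right (sub_le_sub_right h _) (sub_pos.2 hta).le
  rw [slope_def_field, hmin_t, hmono.map_ciInf_of_continuousAt (by fun_prop)
    (Finite.bddBelow_range _)]
  exact iInf_congr fun i ↦ by rw [slope_def_field, i.2]

theorem min_right_directional_deriv_general (m N : ℕ)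
    (f : Fin N → EuclideanSpace ℝ (Fin m) → ℝ)
    (x : EuclideanSpace ℝ (Fin m))
    (hdiff : ∀ l, DifferentiableAt ℝ (f l) x) (v : EuclideanSpace ℝ (Fin m)) :
    Filter.Tendsto
      (fun t : ℝ => ((⨅ l, f l (x + t • v)) - ⨅ l, f l x) / t)
      (nhdsWithin 0 (Set.Ioi 0))
      (nhds (⨅ l : {l : Fin N // f l x = ⨅ l', f l' x}, ⟪gradient (f l) x, v⟫)) := by
  have hline : ∀ l, HasDerivWithinAt (fun t : ℝ ↦ f l (x + t • v))
      ⟪gradient (f l) x, v⟫ (Ioi 0) 0 := fun l ↦ by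
    simpa using HasDerivAt.hasDerivWithinAt
      ((hdiff l).hasGradientAt.hasFDerivAt.hasLineDerivAt v : HasDerivAt _ _ _)
  have hslope := (hasDerivWithinAt_iff_tendsto_slope' self_notMem_Ioi).1
    (hasDerivWithinAt_iInf_Ioi hline)
  rw [zero_smul, add_zero] at hslope
  simpa [slope_fun_def_field] using hslope

/-- For continuous functions `f₁, …, f_N` differentiable at `x`, the minimum
`G(y) = min_l f_l(y)` has, in every direction `v`, a one-sided right directional
derivative at `x` equal to `min_{l active} ⟨∇f_l(x), v⟩`. -/
theorem min_right_directional_deriv (m N : ℕ) (hN : 1 ≤ N)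
    (f : Fin N → EuclideanSpace ℝ (Fin m) → ℝ)
    (hc : ∀ l, Continuous (f l)) (x : EuclideanSpace ℝ (Fin m))
    (hdiff : ∀ l, DifferentiableAt ℝ (f l) x) (v : EuclideanSpace ℝ (Fin m)) :
    Filter.Tendsto
      (fun t : ℝ => ((⨅ l, f l (x + t • v)) - ⨅ l, f l x) / t)
      (nhdsWithin 0 (Set.Ioi 0))
      (nhds (⨅ l : {l : Fin N // f l x = ⨅ l', f l' x}, ⟪gradient (f l) x, v⟫)) :=
  min_right_directional_deriv_general m N f x hdiff v
end

section
/- Let f_1,…,f_N : ℝ^m → ℝ be continuous functions each differentiable at x*, let G(y) = min_{1 ≤ l ≤ N} f_l(y), and let L(x*) = {l : f_l(x*) = G(x*)}. If x* is a local maximum of G, then there is no direction v ∈ ℝ^m with ⟨∇f_l(x*), v⟩ > 0 for all l ∈ L(x*). -/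
open scoped RealInnerProductSpace

/-!
Move from `x*` along the ray `x* + t v`, `t > 0`. For small `t`, every active `f_l` strictly
increases, since its derivative along `v` is `⟨∇f_l(x*), v⟩ > 0`, while every inactive `f_l`
stays above `G(x*)` by continuity. With finitely many indices, the minimum `G(x* + t v)` then
exceeds `G(x*)`, so `x*` is not a local maximum.
-/

open Filter Topology

variable {E : Type*} [NormedAddCommGroup E] [NormedSpace ℝ E] {x v : E}

theorem tendsto_add_smul_nhdsGT_zero :
    Tendsto (fun t : ℝ => x + t • v) (𝓝[>] 0) (𝓝 x) := by
  have hray : Tendsto (fun t : ℝ => x + t • v) (𝓝 0) (𝓝 (x + (0 : ℝ) • v)) :=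
    Continuous.tendsto (by fun_prop) 0
  simpa using hray.mono_left nhdsWithin_le_nhds

theorem HasLineDerivAt.eventually_lt_add_smul {f : E → ℝ} {f' : ℝ}
    (hf : HasLineDerivAt ℝ f f' x v) (hf' : 0 < f') :
    ∀ᶠ t in 𝓝[>] (0 : ℝ), f x < f (x + t • v) := by
  filter_upwards [hf.tendsto_slope_zero_right.eventually (eventually_gt_nhds hf'),
    self_mem_nhdsWithin] with t hslope (ht : 0 < t)
  rw [smul_eq_mul] at hslope
  exact sub_pos.1 (pos_of_mul_pos_right hslope (inv_pos.2 ht).le)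

theorem ContinuousAt.eventually_lt_add_smul {f : E → ℝ} {c : ℝ}
    (hf : ContinuousAt f x) (hc : c < f x) :
    ∀ᶠ t in 𝓝[>] (0 : ℝ), c < f (x + t • v) :=
  (hf.tendsto.comp tendsto_add_smul_nhdsGT_zero).eventually (eventually_gt_nhds hc)

theorem eventually_iInf_lt_iInf_add_smul {ι : Type*} [Finite ι] [Nonempty ι]
    {f : ι → E → ℝ} (hf : ∀ l, DifferentiableAt ℝ (f l) x)
    (hv : ∀ l, f l x = ⨅ l', f l' x → 0 < fderiv ℝ (f l) x v) :
    ∀ᶠ t in 𝓝[>] (0 : ℝ), ⨅ l, f l x < ⨅ l, f l (x + t • v) := by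
  have hbelow : ∀ l, ∀ᶠ t in 𝓝[>] (0 : ℝ), ⨅ l', f l' x < f l (x + t • v) := by
    intro l
    rcases (ciInf_le (Set.finite_range fun l' => f l' x).bddBelow l).eq_or_lt
      with hactive | hinactive
    · rw [hactive]
      exact ((hf l).hasFDerivAt.hasLineDerivAt v).eventually_lt_add_smul (hv l hactive.symm)
    · exact (hf l).continuousAt.eventually_lt_add_smul hinactive
  filter_upwards [eventually_all.2 hbelow] with t ht
  obtain ⟨i, hi⟩ := Finite.exists_min fun l => f l (x + t • v)
  exact (ht i).trans_le (le_ciInf hi)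

theorem no_increasing_direction_at_local_max_general (m N : ℕ) (hN : 1 ≤ N)
    (f : Fin N → EuclideanSpace ℝ (Fin m) → ℝ)
    (xs : EuclideanSpace ℝ (Fin m))
    (hdiff : ∀ l, DifferentiableAt ℝ (f l) xs)
    (hmax : IsLocalMax (fun y => ⨅ l, f l y) xs) :
    ¬ ∃ v : EuclideanSpace ℝ (Fin m),
      ∀ l : Fin N, f l xs = (⨅ l', f l' xs) → 0 < ⟪gradient (f l) xs, v⟫ := by
  rintro ⟨v, hv⟩
  have : Nonempty (Fin N) := ⟨⟨0, hN⟩⟩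
  have hincrease := eventually_iInf_lt_iInf_add_smul hdiff fun l hl => by
    simpa only [inner_gradient_left] using hv l hl
  obtain ⟨t, hlt, hle⟩ :=
    (hincrease.and (tendsto_add_smul_nhdsGT_zero.eventually hmax)).exists
  exact hle.not_gt hlt

/-- If `x*` is a local maximum of `G(y) = min_l f_l(y)` with each `f_l` continuous and
differentiable at `x*`, then no direction `v` has `⟨∇f_l(x*), v⟩ > 0` for every
active index `l`. -/
theorem no_increasing_direction_at_local_max (m N : ℕ) (hN : 1 ≤ N)
    (f : Fin N → EuclideanSpace ℝ (Fin m) → ℝ)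
    (hc : ∀ l, Continuous (f l)) (xs : EuclideanSpace ℝ (Fin m))
    (hdiff : ∀ l, DifferentiableAt ℝ (f l) xs)
    (hmax : IsLocalMax (fun y => ⨅ l, f l y) xs) :
    ¬ ∃ v : EuclideanSpace ℝ (Fin m),
      ∀ l : Fin N, f l xs = (⨅ l', f l' xs) → 0 < ⟪gradient (f l) xs, v⟫ :=
  no_increasing_direction_at_local_max_general m N hN f xs hdiff hmax
end

section
/- Let S be a nonempty finite index set and for each l ∈ S let f_l : ℝ^m → ℝ be a convex function differentiable at a point x'. If 0 lies in the convex hull of {∇f_l(x') : l ∈ S}, then for every x ∈ ℝ^m there exists l* ∈ S with ⟨∇f_{l*}(x'), x − x'⟩ ≥ 0, and hence f_{l*}(x) ≥ f_{l*}(x'). -/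
open scoped RealInnerProductSpace

open Set

/-! The open half-space `{y | ⟪y, x - x'⟫ < 0}` is convex and misses `0`, so it cannot contain
all the gradients; for a gradient outside it, the first-order inequality
`f x' + ⟪∇f x', x - x'⟫ ≤ f x`, obtained by restricting `f` to the segment `[x', x]`, gives
`f x' ≤ f x`. -/

theorem exists_inner_nonneg_of_zero_mem_convexHull {E : Type*} [NormedAddCommGroup E]
    [InnerProductSpace ℝ E] {s : Set E} (h0 : (0 : E) ∈ convexHull ℝ s) (v : E) :
    ∃ y ∈ s, 0 ≤ ⟪y, v⟫ := by
  by_contra! hneg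
  have hconv : Convex ℝ {y : E | ⟪y, v⟫ < 0} :=
    convex_halfSpace_lt ((innerₛₗ ℝ).flip v).isLinear 0
  have h0neg : ⟪(0 : E), v⟫ < 0 := convexHull_min hneg hconv h0
  exact (inner_zero_left v).not_lt h0neg

theorem ConvexOn.add_inner_gradient_le {E : Type*} [NormedAddCommGroup E]
    [InnerProductSpace ℝ E] [CompleteSpace E] {s : Set E} {f : E → ℝ}
    (hf : ConvexOn ℝ s f) {x' x : E} (hx' : x' ∈ s) (hx : x ∈ s)
    (hd : DifferentiableAt ℝ f x') :
    f x' + ⟪gradient f x', x - x'⟫ ≤ f x := by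
  set g : ℝ →ᵃ[ℝ] E := AffineMap.lineMap x' x
  have hg0 : g 0 = x' := AffineMap.lineMap_apply_zero x' x
  have hg1 : g 1 = x := AffineMap.lineMap_apply_one x' x
  have hderiv : HasDerivAt (f ∘ g) ⟪gradient f x', x - x'⟫ 0 := by
    have hfd : HasFDerivAt f (InnerProductSpace.toDual ℝ E (gradient f x')) (g 0) := by
      rw [hg0]; exact hd.hasGradientAt.hasFDerivAt
    simpa only [InnerProductSpace.toDual_apply_apply] using
      hfd.comp_hasDerivAt 0 AffineMap.hasDerivAt_lineMap
  have hslope := (hf.comp_affineMap g).le_slope_of_hasDerivAt (x := 0) (y := 1)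
    (by simpa [hg0] using hx') (by simpa [hg1] using hx) one_pos hderiv
  rw [slope_def_field, Function.comp_apply, Function.comp_apply, hg0, hg1] at hslope
  linarith

theorem convexHull_zero_gives_nondecreasing_direction_general (m N : ℕ)
    (S : Finset (Fin N))
    (f : Fin N → EuclideanSpace ℝ (Fin m) → ℝ)
    (hconv : ∀ l ∈ S, ConvexOn ℝ Set.univ (f l))
    (x' : EuclideanSpace ℝ (Fin m))
    (hdiff : ∀ l ∈ S, DifferentiableAt ℝ (f l) x')
    (h0 : (0 : EuclideanSpace ℝ (Fin m)) ∈ convexHull ℝ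
      ((fun l => gradient (f l) x') '' (S : Set (Fin N)))) :
    ∀ x : EuclideanSpace ℝ (Fin m), ∃ l ∈ S,
      0 ≤ ⟪gradient (f l) x', x - x'⟫ ∧ f l x' ≤ f l x := by
  intro x
  obtain ⟨_, ⟨l, hl, rfl⟩, hnonneg⟩ := exists_inner_nonneg_of_zero_mem_convexHull h0 (x - x')
  have hfirst := (hconv l hl).add_inner_gradient_le (mem_univ x') (mem_univ x) (hdiff l hl)
  exact ⟨l, hl, hnonneg, by linarith⟩

/-- If `0` lies in the convex hull of the gradients at `x'` of finitely many convex
functions, then for every `x` some member `l*` of the family satisfies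
`⟨∇f_{l*}(x'), x - x'⟩ ≥ 0`, and hence `f_{l*}(x) ≥ f_{l*}(x')`. -/
theorem convexHull_zero_gives_nondecreasing_direction (m N : ℕ)
    (S : Finset (Fin N)) (hS : S.Nonempty)
    (f : Fin N → EuclideanSpace ℝ (Fin m) → ℝ)
    (hconv : ∀ l ∈ S, ConvexOn ℝ Set.univ (f l))
    (x' : EuclideanSpace ℝ (Fin m))
    (hdiff : ∀ l ∈ S, DifferentiableAt ℝ (f l) x')
    (h0 : (0 : EuclideanSpace ℝ (Fin m)) ∈ convexHull ℝ
      ((fun l => gradient (f l) x') '' (S : Set (Fin N)))) :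
    ∀ x : EuclideanSpace ℝ (Fin m), ∃ l ∈ S,
      0 ≤ ⟪gradient (f l) x', x - x'⟫ ∧ f l x' ≤ f l x :=
  convexHull_zero_gives_nondecreasing_direction_general m N S f hconv x' hdiff h0
end

section
/- For every k ≥ 1 and d ≥ 2, the cubic grid configuration of n = k^d points in [0,1]^d whose coordinates are the centers ((2a_1 − 1)/(2k), …, (2a_d − 1)/(2k)) for a ∈ {1,…,k}^d satisfies G(grid) = 1/(2k), and this configuration is a local maximum of the maximal radius function G; hence the packing fraction n·ω_d·G^d = ω_d/2^d is realized by jammed packings of k^d spheres for every k. -/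
open scoped BigOperators

/-! Near the grid, a configuration `x` with `G(x) = r ≥ 1/(2k)` is squeezed along every axis
line of the grid: consecutive points on the line are at distance `≥ 2r`, their lateral offsets
are `O(D)` where `D` is the sup-distance to the grid, so their gap along the line is at least
`2r - O(D²)`. Stacking `k` such gaps between the walls at `r` and `1 - r` pins every coordinate
to within `O(D²)` of its grid value. Hence `D = O(D²)`, which forces `D = 0` for `x` close to
the grid. -/

instance (n d : ℕ) : Fintype (Idx n d) := by unfold Idx; infer_instance

theorem two_mul_sub_div_le_of_sq_le {r s δ : ℝ} (hr : 0 < r) (hs : 0 ≤ s) (hδ : 0 ≤ δ)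
    (h : 4 * r ^ 2 - s ≤ δ ^ 2) : 2 * r - s / (2 * r) ≤ δ := by
  rw [sub_le_comm, le_div_iff₀ (by positivity)]
  -- `(2r - δ) 2r ≤ (2r - δ)(2r + δ) = 4r² - δ²` when `δ ≤ 2r`
  rcases le_total δ (2 * r) with hle | hle <;> nlinarith

theorem add_mul_le_of_add_le_succ {k : ℕ} (y : Fin k → ℝ) {r c : ℝ}
    (h0 : ∀ a : Fin k, (a : ℕ) = 0 → r ≤ y a)
    (hstep : ∀ a b : Fin k, (b : ℕ) = a + 1 → y a + c ≤ y b) (a : Fin k) :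
    r + a * c ≤ y a := by
  obtain ⟨a, ha⟩ := a
  induction a with
  | zero => simpa using h0 ⟨0, ha⟩ rfl
  | succ a ih =>
    have := hstep ⟨a, by omega⟩ ⟨a + 1, ha⟩ rfl
    push_cast
    linarith [ih (by omega)]

theorem abs_sub_center_le {k : ℕ} (y : Fin k → ℝ) {r t : ℝ} (hr : 1 / (2 * k) ≤ r)
    (ht : 0 ≤ t) (hbox : ∀ a, r ≤ y a ∧ y a ≤ 1 - r)
    (hstep : ∀ a b : Fin k, (b : ℕ) = a + 1 → y a + (2 * r - t) ≤ y b) (a : Fin k) :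
    |y a - (2 * a + 1) / (2 * k)| ≤ (k - 1) * t := by
  have hak : (a : ℝ) + 1 ≤ k := by exact_mod_cast a.isLt
  have hk : (0 : ℝ) < k := by linarith [a.val.cast_nonneg (α := ℝ)]
  have hlow := add_mul_le_of_add_le_succ y (fun a _ => (hbox a).1) hstep a
  have hhigh := add_mul_le_of_add_le_succ (fun a => 1 - y a.rev) (r := r) (c := 2 * r - t)
    (fun a _ => by linarith [(hbox a.rev).2])
    (fun a b hab => by
      have hrev : (a.rev : ℕ) = b.rev + 1 := by simp only [Fin.val_rev]; omega
      linarith [hstep _ _ hrev]) a.rev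
  simp only [Fin.rev_rev, Fin.val_rev, Nat.cast_sub (Nat.succ_le_of_lt a.isLt)] at hhigh
  push_cast at hhigh
  have hkr : 1 ≤ 2 * k * r := by rwa [div_le_iff₀' (by positivity)] at hr
  rw [abs_le, div_eq_mul_one_div (2 * (a : ℝ) + 1)]
  constructor <;> nlinarith [mul_le_mul_of_nonneg_right hak ht, a.val.cast_nonneg (α := ℝ),
    mul_div_cancel₀ (1 : ℝ) (by positivity : (2 * k : ℝ) ≠ 0)]

section Configuration

variable {n d : ℕ}

theorem pairDist_comm (x : EuclideanSpace ℝ (Fin n × Fin d)) (i j : Fin n) :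
    pairDist n d x i j = pairDist n d x j i := by
  unfold pairDist
  congr 1
  exact Finset.sum_congr rfl fun _ _ => by ring

theorem sq_pairDist (x : EuclideanSpace ℝ (Fin n × Fin d)) (i j : Fin n) :
    pairDist n d x i j ^ 2 = ∑ l : Fin d, (x (i, l) - x (j, l)) ^ 2 :=
  Real.sq_sqrt (Finset.sum_nonneg fun _ _ => sq_nonneg _)

theorem abs_sub_le_pairDist (x : EuclideanSpace ℝ (Fin n × Fin d)) (i j : Fin n) (m : Fin d) :
    |x (i, m) - x (j, m)| ≤ pairDist n d x i j := by
  rw [← Real.sqrt_sq_eq_abs]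
  exact Real.sqrt_le_sqrt (Finset.single_le_sum (f := fun l => (x (i, l) - x (j, l)) ^ 2)
    (fun _ _ => sq_nonneg _) (Finset.mem_univ m))

theorem maxRad_le_famF (x : EuclideanSpace ℝ (Fin n × Fin d)) (l : Idx n d) :
    maxRad n d x ≤ famF n d l x :=
  ciInf_le (Set.finite_range _).bddBelow l

theorem maxRad_le_apply (x : EuclideanSpace ℝ (Fin n × Fin d)) (q : Fin n × Fin d) :
    maxRad n d x ≤ x q :=
  maxRad_le_famF x (Sum.inr (Sum.inl q))

theorem admissible_maxRad (x : EuclideanSpace ℝ (Fin n × Fin d)) :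
    Admissible n d (maxRad n d x) x := by
  refine ⟨fun i j hij => ?_, fun q => ⟨maxRad_le_apply x q, ?_⟩⟩
  · rcases hij.lt_or_gt with hlt | hgt
    · have : maxRad n d x ≤ pairDist n d x i j / 2 := maxRad_le_famF x (Sum.inl ⟨(i, j), hlt⟩)
      linarith
    · have : maxRad n d x ≤ pairDist n d x j i / 2 := maxRad_le_famF x (Sum.inl ⟨(j, i), hgt⟩)
      rw [pairDist_comm]
      linarith
  · have : maxRad n d x ≤ 1 - x q := maxRad_le_famF x (Sum.inr (Sum.inr q))
    linarith

theorem le_maxRad_of_admissible [Nonempty (Fin n × Fin d)] {r : ℝ}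
    {x : EuclideanSpace ℝ (Fin n × Fin d)} (hx : Admissible n d r x) : r ≤ maxRad n d x := by
  have : Nonempty (Idx n d) := ⟨Sum.inr (Sum.inl (Classical.arbitrary _))⟩
  refine le_ciInf fun l => ?_
  rcases l with ⟨⟨i, j⟩, hij⟩ | q | q
  · show r ≤ pairDist n d x i j / 2
    linarith [hx.1 i j hij.ne]
  · exact (hx.2 q).1
  · show r ≤ 1 - x q
    linarith [(hx.2 q).2]

theorem two_mul_sub_le_sub_of_le_pairDist {x : EuclideanSpace ℝ (Fin n × Fin d)} {r δ : ℝ}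
    (hr : 0 < r) {i j : Fin n} {m : Fin d} (hdist : 2 * r ≤ pairDist n d x i j)
    (hlat : ∀ l, l ≠ m → |x (i, l) - x (j, l)| ≤ δ) (hle : x (i, m) ≤ x (j, m)) :
    2 * r - (d - 1 : ℕ) * δ ^ 2 / (2 * r) ≤ x (j, m) - x (i, m) := by
  have hsum : 4 * r ^ 2 ≤ ∑ l, (x (i, l) - x (j, l)) ^ 2 := by
    rw [← sq_pairDist]
    nlinarith
  have hrest : ∑ l ∈ Finset.univ.erase m, (x (i, l) - x (j, l)) ^ 2 ≤ (d - 1 : ℕ) * δ ^ 2 := by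
    calc ∑ l ∈ Finset.univ.erase m, (x (i, l) - x (j, l)) ^ 2
        ≤ ∑ l ∈ Finset.univ.erase m, δ ^ 2 := Finset.sum_le_sum fun l hl =>
          sq_le_sq.2 ((hlat l (Finset.ne_of_mem_erase hl)).trans (le_abs_self δ))
      _ = (d - 1 : ℕ) * δ ^ 2 := by simp [Finset.card_erase_of_mem]
  rw [← Finset.add_sum_erase _ _ (Finset.mem_univ m)] at hsum
  exact two_mul_sub_div_le_of_sq_le hr (by positivity) (sub_nonneg.2 hle) (by nlinarith)

variable {k : ℕ} (e : Fin n ≃ (Fin d → Fin k))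

noncomputable def cubicGrid : EuclideanSpace ℝ (Fin n × Fin d) :=
  WithLp.toLp 2 fun q => (2 * ((e q.1 q.2 : ℕ) : ℝ) + 1) / (2 * k)

def gridLine (i : Fin n) (m : Fin d) (a : Fin k) : Fin n :=
  e.symm (Function.update (e i) m a)

theorem gridLine_self (i : Fin n) (m : Fin d) : gridLine e i m (e i m) = i := by
  simp [gridLine]

theorem cubicGrid_gridLine (i : Fin n) (m : Fin d) (a : Fin k) (l : Fin d) :
    cubicGrid e (gridLine e i m a, l) =
      (2 * ((Function.update (e i) m a l : ℕ) : ℝ) + 1) / (2 * k) := by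
  simp [cubicGrid, gridLine]

theorem add_le_gridLine_succ {x : EuclideanSpace ℝ (Fin n × Fin d)} {r D : ℝ} (hr : 0 < r)
    (hx : Admissible n d r x) (hD : ∀ q, |x q - cubicGrid e q| ≤ D) (hDk : 2 * D ≤ 1 / k)
    (i : Fin n) (m : Fin d) (a b : Fin k) (hab : (b : ℕ) = a + 1) :
    x (gridLine e i m a, m) + (2 * r - (d - 1 : ℕ) * (2 * D) ^ 2 / (2 * r)) ≤
      x (gridLine e i m b, m) := by
  have hne : gridLine e i m a ≠ gridLine e i m b := by
    intro h
    have := congrArg (fun p => (e p m : ℕ)) h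
    simp [gridLine] at this
    omega
  have hlat : ∀ l, l ≠ m → |x (gridLine e i m a, l) - x (gridLine e i m b, l)| ≤ 2 * D := by
    intro l hl
    have ha := hD (gridLine e i m a, l)
    have hb := hD (gridLine e i m b, l)
    rw [cubicGrid_gridLine, Function.update_of_ne hl] at ha hb
    rw [abs_le] at *
    constructor <;> linarith
  have hle : x (gridLine e i m a, m) ≤ x (gridLine e i m b, m) := by
    have ha := hD (gridLine e i m a, m)
    have hb := hD (gridLine e i m b, m)
    have hgap : cubicGrid e (gridLine e i m b, m) - cubicGrid e (gridLine e i m a, m) = 1 / k := by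
      rw [cubicGrid_gridLine, cubicGrid_gridLine, Function.update_self, Function.update_self, hab]
      have : (k : ℝ) ≠ 0 := by exact_mod_cast a.pos.ne'
      field_simp
      push_cast
      ring
    rw [abs_le] at ha hb
    linarith
  linarith [two_mul_sub_le_sub_of_le_pairDist hr (hx.1 _ _ hne) hlat hle]

theorem abs_sub_cubicGrid_le {x : EuclideanSpace ℝ (Fin n × Fin d)} {r D : ℝ}
    (hr : 1 / (2 * k) ≤ r) (hx : Admissible n d r x) (hD : ∀ q, |x q - cubicGrid e q| ≤ D)
    (hDk : 2 * D ≤ 1 / k) (q : Fin n × Fin d) :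
    |x q - cubicGrid e q| ≤ 4 * k * (k - 1) * (d - 1 : ℕ) * D ^ 2 := by
  obtain ⟨i, m⟩ := q
  have hk : (1 : ℝ) ≤ k := by exact_mod_cast (e i m).pos
  have hk1 : (0 : ℝ) ≤ k - 1 := by linarith
  have hr0 : 0 < r := lt_of_lt_of_le (by positivity) hr
  have hkr : 1 ≤ 2 * k * r := by rwa [div_le_iff₀' (by positivity)] at hr
  have hline := abs_sub_center_le (fun a => x (gridLine e i m a, m)) hr (by positivity)
    (fun a => hx.2 _) (add_le_gridLine_succ e hr0 hx hD hDk i m) (e i m)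
  simp only [gridLine_self] at hline
  refine hline.trans ?_
  rw [mul_div_assoc', div_le_iff₀ (by positivity)]
  nlinarith [mul_le_mul_of_nonneg_left hkr
    (by positivity : (0 : ℝ) ≤ (k - 1) * (d - 1 : ℕ) * (2 * D) ^ 2)]

theorem admissible_cubicGrid : Admissible n d (1 / (2 * k)) (cubicGrid e) := by
  refine ⟨fun i j hij => ?_, fun q => ?_⟩
  · obtain ⟨m, hm⟩ : ∃ m, e i m ≠ e j m := by
      by_contra! h
      exact hij (e.injective (funext h))
    have hk : (0 : ℝ) < k := by exact_mod_cast (e i m).pos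
    have hone : 1 ≤ |((e i m : ℕ) : ℝ) - (e j m : ℕ)| := by
      rcases Nat.lt_or_gt_of_ne (Fin.val_ne_of_ne hm) with h | h
      · have : ((e i m : ℕ) : ℝ) + 1 ≤ (e j m : ℕ) := by exact_mod_cast h
        exact le_abs.2 (Or.inr (by linarith))
      · have : ((e j m : ℕ) : ℝ) + 1 ≤ (e i m : ℕ) := by exact_mod_cast h
        exact le_abs.2 (Or.inl (by linarith))
    have hdiff : cubicGrid e (i, m) - cubicGrid e (j, m) =
        (((e i m : ℕ) : ℝ) - (e j m : ℕ)) / k := by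
      simp only [cubicGrid]
      field_simp
      ring
    calc 2 * (1 / (2 * k)) = 1 / (k : ℝ) := by field_simp
      _ ≤ |cubicGrid e (i, m) - cubicGrid e (j, m)| := by
        rw [hdiff, abs_div, abs_of_pos hk]
        gcongr
      _ ≤ pairDist n d (cubicGrid e) i j := abs_sub_le_pairDist _ _ _ _
  · have hlt : ((e q.1 q.2 : ℕ) : ℝ) + 1 ≤ k := by exact_mod_cast (e q.1 q.2).isLt
    have hk : (0 : ℝ) < k := by exact_mod_cast (e q.1 q.2).pos
    simp only [cubicGrid]
    constructor
    · gcongr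
      linarith [(e q.1 q.2 : ℕ).cast_nonneg (α := ℝ)]
    · rw [le_sub_iff_add_le, ← add_div, div_le_one (by positivity)]
      linarith

theorem maxRad_cubicGrid (hd : 0 < d) (hk : 0 < k) :
    maxRad n d (cubicGrid e) = 1 / (2 * k) := by
  have : Nonempty (Fin n) := ⟨e.symm fun _ => ⟨0, hk⟩⟩
  have : Nonempty (Fin d) := ⟨⟨0, hd⟩⟩
  refine le_antisymm ?_ (le_maxRad_of_admissible (admissible_cubicGrid e))
  simpa [cubicGrid] using maxRad_le_apply (cubicGrid e) (e.symm fun _ => ⟨0, hk⟩, ⟨0, hd⟩)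

theorem isLocalMax_maxRad_cubicGrid (hd : 0 < d) (hk : 0 < k) :
    IsLocalMax (maxRad n d) (cubicGrid e) := by
  have hk' : (0 : ℝ) < k := by exact_mod_cast hk
  set C : ℝ := 4 * k * (k - 1) * (d - 1 : ℕ)
  have hC : 0 ≤ C := by
    have : (1 : ℝ) ≤ k := by exact_mod_cast hk
    positivity
  set ε : ℝ := min (1 / (2 * k)) (1 / (C + 1))
  have hε : 0 < ε := lt_min (by positivity) (by positivity)
  filter_upwards [Metric.ball_mem_nhds _ hε] with x hx
  rw [maxRad_cubicGrid e hd hk]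
  by_contra! hlt
  set D := dist (WithLp.ofLp x) (WithLp.ofLp (cubicGrid e))
  have hDε : D < ε :=
    ((PiLp.lipschitzWith_ofLp 2 _).dist_le_mul x _).trans_lt (by simpa using hx)
  have hD : ∀ q, |x q - cubicGrid e q| ≤ D := fun q => by
    rw [← Real.dist_eq]
    exact dist_le_pi_dist _ _ q
  have hDk : 2 * D ≤ 1 / k := by
    have := hDε.trans_le (min_le_left _ _)
    rw [lt_div_iff₀ (by positivity)] at this
    rw [le_div_iff₀ hk']
    linarith
  have hquad : D ≤ C * D ^ 2 := (dist_pi_le_iff (by positivity)).2 fun q =>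
    (Real.dist_eq _ _).trans_le (abs_sub_cubicGrid_le e hlt.le (admissible_maxRad x) hD hDk q)
  have hD0 : D = 0 := by
    have := hDε.trans_le (min_le_right _ _)
    rw [lt_div_iff₀ (by positivity)] at this
    nlinarith [dist_nonneg (x := WithLp.ofLp x) (y := WithLp.ofLp (cubicGrid e))]
  have hx : x = cubicGrid e := (WithLp.ext_iff _).2 (dist_eq_zero.1 hD0)
  rw [hx, maxRad_cubicGrid e hd hk] at hlt
  exact lt_irrefl _ hlt

end Configuration

/-- The cubic grid of `n = k^d` points with coordinates `(2a+1)/(2k)`, `a ∈ {0,…,k-1}`,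
satisfies `G(grid) = 1/(2k)`, is a local maximum of `G`, and realizes the packing
fraction `n ⬝ ω_d ⬝ G^d = ω_d / 2^d`. -/
theorem grid_is_jammed (d k : ℕ) (hd : 2 ≤ d) (hk : 1 ≤ k) (n : ℕ) (hn : n = k ^ d)
    (e : Fin n ≃ (Fin d → Fin k)) (grid : EuclideanSpace ℝ (Fin n × Fin d))
    (hgrid : ∀ q : Fin n × Fin d,
      grid q = (2 * ((e q.1 q.2 : ℕ) : ℝ) + 1) / (2 * k)) :
    maxRad n d grid = 1 / (2 * k) ∧
    IsLocalMax (maxRad n d) grid ∧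
    (n : ℝ) * (MeasureTheory.volume
        (Metric.closedBall (0 : EuclideanSpace ℝ (Fin d)) 1)).toReal
        * maxRad n d grid ^ d
      = (MeasureTheory.volume
        (Metric.closedBall (0 : EuclideanSpace ℝ (Fin d)) 1)).toReal / 2 ^ d := by
  obtain rfl : grid = cubicGrid e := (WithLp.ext_iff _).2 (funext hgrid)
  have hval := maxRad_cubicGrid e (by omega) hk
  refine ⟨hval, isLocalMax_maxRad_cubicGrid e (by omega) hk, ?_⟩
  rw [hval, hn, div_pow, one_pow, mul_pow]
  push_cast
  field_simp
end
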